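/- Let G be a nonelementary Roman saturated v-critical finite simple graph of order n with γ_R(G) = 4. If V_1 := {v ∈ V(G) : deg(v) = n − 3}, then |V_1| ≥ 3n/4. -/

import Mathlib

open SimpleGraph

/-- A Roman domination function on `G`. -/
def IsRomanFn {V : Type*} (G : SimpleGraph V) (r : V → Fin 3) : Prop :=
  ∀ u, r u = 0 → ∃ v, G.Adj u v ∧ r v = 2

/-- The weight of a Roman domination function. -/
noncomputable def romanWeight {V : Type*} [Fintype V] (r : V → Fin 3) : ℕ :=
  ∑ u, (r u : ℕ)

/-- The Roman domination number of `G`. -/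
noncomputable def romanNumber {V : Type*} [Fintype V] (G : SimpleGraph V) : ℕ :=
  sInf {w | ∃ r : V → Fin 3, IsRomanFn G r ∧ romanWeight r = w}

/-- `G` is vertex critical. -/
def VCritical {V : Type*} [Fintype V] [DecidableEq V] (G : SimpleGraph V) : Prop :=
  ∀ v : V, romanNumber (G.induce {u | u ≠ v}) = romanNumber G - 1

/-- `G` is edge critical. -/
def ECritical {V : Type*} [Fintype V] [DecidableEq V] (G : SimpleGraph V) : Prop :=
  VCritical G ∧ ∀ e ∈ G.edgeSet, ¬ VCritical (G.deleteEdges {e})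

/-- `G` is Roman saturated. -/
def RomanSaturated {V : Type*} [Fintype V] (G : SimpleGraph V) : Prop :=
  ∀ v w : V, v ≠ w → ¬ G.Adj v w →
    romanNumber (G ⊔ SimpleGraph.fromEdgeSet {s(v, w)}) = romanNumber G - 1

/-- `v` is a cut vertex of `G`. -/
def IsCutVertex {V : Type*} [Fintype V] [DecidableEq V] (G : SimpleGraph V) (v : V) : Prop :=
  Nat.card G.ConnectedComponent < Nat.card (G.induce {u | u ≠ v}).ConnectedComponent

/-!
Call a vertex *tight* if it has exactly two non-neighbours. When `γ_R(G) = 4` every vertex has at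
least two non-neighbours: putting 2 on a vertex and 1 on its only non-neighbour would give weight 3.
Conversely, on more than three vertices a Roman function of weight 3 puts 2 on a vertex adjacent to
all but at most one other vertex. Applied to `G - v` (v-criticality), this makes every vertex `v` a
non-neighbour of a tight vertex; applied to `G + vw` (saturation), it makes one of any two
non-adjacent vertices tight. So in the complement graph the non-tight vertices are independent and
have at least three (tight) neighbours each, while a tight vertex has a tight neighbour and hence
at most one non-tight one. Counting the edges between the two classes gives `3 (n - |V₁|) ≤ |V₁|`.
-/

open Finset

section RomanDomination

variable {V : Type*} (G : SimpleGraph V)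

lemma isRomanFn_one : IsRomanFn G (fun _ => 1) := fun _ h => by simp at h

variable [Fintype V]

lemma romanNumber_le_romanWeight {r : V → Fin 3} (hr : IsRomanFn G r) :
    romanNumber G ≤ romanWeight r :=
  Nat.sInf_le ⟨r, hr, rfl⟩

lemma exists_isRomanFn_romanWeight_eq :
    ∃ r : V → Fin 3, IsRomanFn G r ∧ romanWeight r = romanNumber G :=
  Nat.sInf_mem (s := {w | ∃ r, IsRomanFn G r ∧ romanWeight r = w}) ⟨_, _, isRomanFn_one G, rfl⟩

lemma romanNumber_le_card : romanNumber G ≤ Fintype.card V :=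
  (romanNumber_le_romanWeight G (isRomanFn_one G)).trans_eq (by simp [romanWeight])

variable {G} in
lemma IsRomanFn.exists_eq_two {r : V → Fin 3} (hr : IsRomanFn G r)
    (hlt : romanWeight r < Fintype.card V) : ∃ u, r u = 2 := by
  by_contra! h2
  have h1 : ∀ u, r u = 1 := fun u => by
    have h0 : r u ≠ 0 := fun h0 => (hr u h0).elim fun v hv => h2 v hv.2
    have := h2 u
    revert h0 this; generalize r u = a; revert a; decide
  simp [romanWeight, h1] at hlt

lemma romanNumber_le_three_of_forall_adj (u w : V) (h : ∀ x, x ≠ u → x ≠ w → G.Adj u x) :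
    romanNumber G ≤ 3 := by
  classical
  let r : V → Fin 3 := fun x => if x = u then 2 else if x = w then 1 else 0
  have hr : IsRomanFn G r := fun x hx => by
    have hxu : x ≠ u := by rintro rfl; simp [r] at hx
    have hxw : x ≠ w := by rintro rfl; simp [r, hxu] at hx
    exact ⟨u, (h x hxu hxw).symm, by simp [r]⟩
  have hweight : romanWeight r ≤ 3 := calc
    romanWeight r ≤ ∑ x, ((if x = u then 2 else 0) + (if x = w then 1 else 0)) :=
      sum_le_sum fun x _ => by simp only [r]; split_ifs <;> simp
    _ = 3 := by simp [sum_add_distrib]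
  exact (romanNumber_le_romanWeight G hr).trans hweight

lemma exists_forall_adj_of_romanNumber_le_three (h3 : romanNumber G ≤ 3)
    (hlt : romanNumber G < Fintype.card V) :
    ∃ u w, ∀ x, x ≠ u → x ≠ w → G.Adj u x := by
  classical
  obtain ⟨r, hr, hrw⟩ := exists_isRomanFn_romanWeight_eq G
  obtain ⟨u, hu⟩ := hr.exists_eq_two (hrw ▸ hlt)
  set A := univ.filter fun x => x ≠ u ∧ r x ≠ 0
  have hA : 2 + ∑ x ∈ A, (r x : ℕ) ≤ 3 := calc
    2 + ∑ x ∈ A, (r x : ℕ) ≤ (r u : ℕ) + ∑ x ∈ univ.erase u, (r x : ℕ) := by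
      gcongr
      · simp [hu]
      · exact fun x hx => mem_erase.mpr ⟨(mem_filter.mp hx).2.1, mem_univ x⟩
    _ = romanWeight r := add_sum_erase _ (fun x => (r x : ℕ)) (mem_univ u)
    _ ≤ 3 := hrw ▸ h3
  have hle : ∀ x ∈ A, (r x : ℕ) ≤ 1 := fun x hx =>
    (single_le_sum (f := fun x => (r x : ℕ)) (fun _ _ => Nat.zero_le _) hx).trans (by omega)
  have hcard : #A ≤ 1 := by
    have := A.card_nsmul_le_sum (fun x => (r x : ℕ)) 1 fun x hx =>
      Nat.one_le_iff_ne_zero.mpr fun h => (mem_filter.mp hx).2.2 (Fin.ext h)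
    simp only [smul_eq_mul, mul_one] at this
    omega
  have : Nonempty V := ⟨u⟩
  obtain ⟨w, hw⟩ := card_le_one_iff_subset_singleton.mp hcard
  refine ⟨u, w, fun x hxu hxw => ?_⟩
  have hx0 : r x = 0 := by
    by_contra hx0
    exact hxw (mem_singleton.mp (hw (by simp [A, hxu, hx0])))
  obtain ⟨y, hxy, hy⟩ := hr x hx0
  obtain rfl : y = u := by
    by_contra hyu
    simpa [hy] using hle y (by simp [A, hyu, hy])
  exact hxy.symm

end RomanDomination

lemma Set.ncard_pair_le {α : Type*} (a b : α) : ({a, b} : Set α).ncard ≤ 2 :=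
  (Set.ncard_insert_le a {b}).trans (by rw [Set.ncard_singleton])

section NonNeighbours

variable {V : Type*} [Fintype V] (G : SimpleGraph V)

lemma ncard_neighborSet_add_ncard_compl_neighborSet (v : V) :
    (G.neighborSet v).ncard + (Gᶜ.neighborSet v).ncard + 1 = Fintype.card V := by
  rw [← Set.ncard_union_eq (G.compl_neighborSet_disjoint v),
    G.neighborSet_union_compl_neighborSet_eq, ← Set.ncard_singleton v, add_comm,
    Set.ncard_add_ncard_compl, Nat.card_eq_fintype_card]

lemma two_le_ncard_compl_neighborSet (hG : 3 < romanNumber G) (u : V) :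
    2 ≤ (Gᶜ.neighborSet u).ncard := by
  by_contra! h
  have : Nonempty V := ⟨u⟩
  obtain ⟨w, hw⟩ := (Set.ncard_le_one_iff_subset_singleton).mp (Nat.lt_succ_iff.mp h)
  have := romanNumber_le_three_of_forall_adj G u w fun x hxu hxw => by
    by_contra hadj
    exact hxw (hw ⟨hxu.symm, hadj⟩)
  omega

lemma exists_ncard_compl_neighborSet_eq_two_of_romanNumber_induce [DecidableEq V]
    (hG : 3 < romanNumber G) (hV : 4 < Fintype.card V) (v : V)
    (hv : romanNumber (G.induce {u | u ≠ v}) ≤ 3) :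
    ∃ u, (Gᶜ.neighborSet u).ncard = 2 ∧ Gᶜ.Adj u v := by
  have hcard : Fintype.card {u | u ≠ v} = Fintype.card V - 1 := by
    simp [filter_ne', card_erase_of_mem]
  obtain ⟨u, w, hu⟩ := exists_forall_adj_of_romanNumber_le_three _ hv (by omega)
  have hsub : Gᶜ.neighborSet u ⊆ {v, ↑w} := fun x ⟨hux, hnadj⟩ => by
    by_contra hx
    simp only [Set.mem_insert_iff, Set.mem_singleton_iff, not_or] at hx
    exact hnadj (hu ⟨x, hx.1⟩ (fun h => hux (congrArg Subtype.val h).symm)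
      (fun h => hx.2 (congrArg Subtype.val h)))
  have heq := Set.eq_of_subset_of_ncard_le hsub
    ((Set.ncard_pair_le _ _).trans (two_le_ncard_compl_neighborSet G hG u))
  refine ⟨u, ?_, ?_⟩
  · rw [heq, Set.ncard_pair (Ne.symm w.2)]
  · show v ∈ Gᶜ.neighborSet u
    rw [heq]
    exact Set.mem_insert v _

lemma ncard_compl_neighborSet_eq_two_of_romanNumber_sup_edge (hG : 3 < romanNumber G) {v w : V}
    (h : romanNumber (G ⊔ fromEdgeSet {s(v, w)}) ≤ 3) :
    (Gᶜ.neighborSet v).ncard = 2 ∨ (Gᶜ.neighborSet w).ncard = 2 := by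
  obtain ⟨u, x, hu⟩ := exists_forall_adj_of_romanNumber_le_three _ h
    (by have := romanNumber_le_card G; omega)
  have hnonadj : ∀ y ∈ Gᶜ.neighborSet u, y = x ∨ s(u, y) = s(v, w) := by
    rintro y ⟨huy, hnadj⟩
    by_cases hyx : y = x
    · exact .inl hyx
    · have := hu y (Ne.symm huy) hyx
      simp only [sup_adj, fromEdgeSet_adj, Set.mem_singleton_iff] at this
      exact .inr (this.resolve_left hnadj).1
  have htwo := two_le_ncard_compl_neighborSet G hG u
  have hle (y : V) (hy : ∀ z, s(u, z) = s(v, w) → z = y) :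
      (Gᶜ.neighborSet u).ncard ≤ ({x, y} : Set V).ncard :=
    Set.ncard_le_ncard fun z hz => (hnonadj z hz).imp id (hy z)
  by_cases huv : u = v
  · subst huv
    refine .inl (le_antisymm ((hle w fun z => ?_).trans (Set.ncard_pair_le _ _)) htwo)
    exact Sym2.congr_right.mp
  by_cases huw : u = w
  · subst huw
    refine .inr (le_antisymm ((hle v fun z hz => ?_).trans (Set.ncard_pair_le _ _)) htwo)
    exact Sym2.congr_right.mp (hz.trans Sym2.eq_swap)
  · have := (hle x fun z hz => absurd (hz ▸ Sym2.mem_mk_left u z) (by simp [huv, huw])).trans_eq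
      (by simp : ({x, x} : Set V).ncard = 1)
    omega

end NonNeighbours

lemma three_mul_card_le_four_mul_ncard_setOf_ncard_neighborSet_eq_two {V : Type*} [Fintype V]
    (H : SimpleGraph V) (hmin : ∀ v, 2 ≤ (H.neighborSet v).ncard)
    (hind : ∀ t t', (H.neighborSet t).ncard ≠ 2 → (H.neighborSet t').ncard ≠ 2 → ¬ H.Adj t t')
    (hcov : ∀ s, (H.neighborSet s).ncard = 2 → ∃ u, (H.neighborSet u).ncard = 2 ∧ H.Adj s u) :
    3 * Fintype.card V ≤ 4 * {v | (H.neighborSet v).ncard = 2}.ncard := by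
  classical
  set S := {v | (H.neighborSet v).ncard = 2}.toFinset
  have hSc : ∀ t ∈ Sᶜ, 3 ≤ #(S.bipartiteAbove H.Adj t) := fun t ht => by
    have ht2 : (H.neighborSet t).ncard ≠ 2 := by simpa [S] using ht
    have hsub : H.neighborSet t ⊆ ↑(S.bipartiteAbove H.Adj t) := fun t' ht' => by
      simp only [bipartiteAbove, coe_filter, Set.mem_ofPred_eq, S, Set.mem_toFinset]
      exact ⟨by_contra fun h => hind t t' ht2 h ht', ht'⟩
    calc 3 ≤ (H.neighborSet t).ncard := by have := hmin t; omega
      _ ≤ _ := Set.ncard_le_ncard hsub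
      _ = _ := Set.ncard_coe_finset _
  have hS : ∀ s ∈ S, #(Sᶜ.bipartiteBelow H.Adj s) ≤ 1 := fun s hs => by
    have hs2 : (H.neighborSet s).ncard = 2 := by simpa [S] using hs
    obtain ⟨u, hu, hsu⟩ := hcov s hs2
    have hsub : ↑(Sᶜ.bipartiteBelow H.Adj s) ⊆ H.neighborSet s \ {u} := fun t ht => by
      simp only [bipartiteBelow, coe_filter, mem_compl, S, Set.mem_toFinset,
        Set.mem_ofPred_eq] at ht
      exact ⟨ht.2.symm, fun h => ht.1 (h ▸ hu)⟩
    calc #(Sᶜ.bipartiteBelow H.Adj s) = _ := (Set.ncard_coe_finset _).symm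
      _ ≤ _ := Set.ncard_le_ncard hsub
      _ = 1 := by rw [Set.ncard_sdiff_singleton_of_mem (s := H.neighborSet s) hsu, hs2]
  have hcount := card_mul_le_card_mul H.Adj hSc hS
  have hsplit := card_add_card_compl S
  have hcardS : {v | (H.neighborSet v).ncard = 2}.ncard = #S := Set.ncard_eq_toFinset_card' _
  omega

/-- in a nonelementary Roman saturated v-critical graph of order `n` with
γ_R(G) = 4, at least 3n/4 vertices have degree `n - 3`. -/
theorem three_quarters_vertices_have_degree {V : Type*} [Fintype V] [DecidableEq V]
    (G : SimpleGraph V) (hne : romanNumber G < Fintype.card V) (hs : RomanSaturated G)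
    (hv : VCritical G) (h4 : romanNumber G = 4) :
    3 * Fintype.card V ≤ 4 * {v : V | (G.neighborSet v).ncard = Fintype.card V - 3}.ncard := by
  have hV : 4 < Fintype.card V := h4 ▸ hne
  have hG : 3 < romanNumber G := by omega
  have hdeg := two_le_ncard_compl_neighborSet G hG
  have hset : {v | (G.neighborSet v).ncard = Fintype.card V - 3} =
      {v | (Gᶜ.neighborSet v).ncard = 2} := by
    ext v
    have := ncard_neighborSet_add_ncard_compl_neighborSet G v
    have := hdeg v
    simp only [Set.mem_ofPred_eq]
    omega
  rw [hset]
  refine three_mul_card_le_four_mul_ncard_setOf_ncard_neighborSet_eq_two Gᶜ hdeg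
    (fun t t' ht ht' hadj => ?_) (fun s _ => ?_)
  · rcases ncard_compl_neighborSet_eq_two_of_romanNumber_sup_edge G hG
      ((hs t t' hadj.1 hadj.2).trans_le (by omega)) with h | h
    exacts [ht h, ht' h]
  · obtain ⟨u, hu, hus⟩ := exists_ncard_compl_neighborSet_eq_two_of_romanNumber_induce G hG hV s
      ((hv s).trans_le (by omega))
    exact ⟨u, hu, hus.symm⟩
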